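/- Let N = 2, write b(0) := C^stb(2), b(1) := C^stb(1), b(2) := C^stb(0) = 1, and let λ ∈ (0, λ_max) with λ_max = η₀ · b(1)/b(0). Then x := −(η₀ / (2·(η₀·b(1) − λ·b(0)))) · (η₀ − λ·b(1) − √((η₀ + λ·b(1))² − 4·λ²·b(0))) is strictly positive and satisfies λ_eff(x) = λ, and it is the unique positive solution of this equation. -/
import Mathlib


open Finset

/-- `Cstb J η ν m` is the normalisation constant `C^stb(m)` of the stability network:
the sum over tuples `(n₁,…,n_J)` with `n₁+⋯+n_J = m` of `∏_j ∏_{i=1}^{n_j} η_j/ν_j(i)`. -/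
noncomputable def Cstb (J : ℕ) (η : Fin J → ℝ) (ν : Fin J → ℕ → ℝ) (m : ℕ) : ℝ :=
  ∑ n ∈ Finset.Nat.antidiagonalTuple J m,
    ∏ j, ∏ i ∈ Finset.range (n j), η j / ν j (i + 1)

/-- The effective arrival rate of the lost-customers modification with arrival rate `x`. -/
noncomputable def lamEff (J N : ℕ) (η0 : ℝ) (η : Fin J → ℝ) (ν : Fin J → ℕ → ℝ)
    (x : ℝ) : ℝ :=
  x * (1 - Cstb J η ν N /
    ∑ n0 ∈ Finset.range (N + 1), (η0 / x) ^ n0 * Cstb J η ν (N - n0))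

lemma Cstb_zero (J : ℕ) (η : Fin J → ℝ) (ν : Fin J → ℕ → ℝ) : Cstb J η ν 0 = 1 := by
  simp [Cstb, Finset.Nat.antidiagonalTuple_zero_right]

lemma Cstb_pos (J : ℕ) (hJ : 1 ≤ J) (η : Fin J → ℝ) (hη : ∀ j, 0 < η j)
    (ν : Fin J → ℕ → ℝ) (hν : ∀ j i, 1 ≤ i → 0 < ν j i) (m : ℕ) :
    0 < Cstb J η ν m := by
  apply Finset.sum_pos
  · intro n _
    apply Finset.prod_pos; intro j _
    apply Finset.prod_pos; intro i _
    exact div_pos (hη j) (hν j (i+1) (Nat.le_add_left 1 i))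
  · exact ⟨Pi.single ⟨0, hJ⟩ m, by simp [Finset.Nat.mem_antidiagonalTuple]⟩

lemma lamEff_two (J : ℕ) (η0 : ℝ) (η : Fin J → ℝ) (ν : Fin J → ℕ → ℝ) (y : ℝ) :
    lamEff J 2 η0 η ν y =
      y * (1 - Cstb J η ν 2 /
        (Cstb J η ν 2 + (η0 / y) * Cstb J η ν 1 + (η0 / y) ^ 2)) := by
  unfold lamEff
  rw [show (2:ℕ)+1 = 3 from rfl]
  rw [Finset.sum_range_succ, Finset.sum_range_succ, Finset.sum_range_succ,
    Finset.sum_range_zero, Cstb_zero]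
  norm_num

/-- For `N = 2`, with `b(0) = C^stb(2)`, `b(1) = C^stb(1)`, `b(2) = C^stb(0) = 1` and
`λ ∈ (0, λ_max)` where `λ_max = η₀·b(1)/b(0)`, the value
`x = −(η₀/(2(η₀b(1) − λb(0))))·(η₀ − λb(1) − √((η₀ + λb(1))² − 4λ²b(0)))`
is strictly positive, satisfies `λ_eff(x) = λ`, and is the unique positive solution. -/
theorem adjusted_rate_N_eq_two
    (J : ℕ) (hJ : 1 ≤ J)
    (η0 : ℝ) (hη0 : 0 < η0)
    (η : Fin J → ℝ) (hη : ∀ j, 0 < η j)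
    (ν : Fin J → ℕ → ℝ) (hν : ∀ j i, 1 ≤ i → 0 < ν j i)
    (lam : ℝ) (hlam0 : 0 < lam)
    (hlam : lam < η0 * Cstb J η ν 1 / Cstb J η ν 2)
    (x : ℝ)
    (hx : x = -(η0 / (2 * (η0 * Cstb J η ν 1 - lam * Cstb J η ν 2))) *
        (η0 - lam * Cstb J η ν 1 -
          Real.sqrt ((η0 + lam * Cstb J η ν 1) ^ 2 - 4 * lam ^ 2 * Cstb J η ν 2))) :
    0 < x ∧ lamEff J 2 η0 η ν x = lam ∧
    ∀ y : ℝ, 0 < y → lamEff J 2 η0 η ν y = lam → y = x := by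
  set b0 := Cstb J η ν 2 with hb0def
  set b1 := Cstb J η ν 1 with hb1def
  have hb0 : 0 < b0 := Cstb_pos J hJ η hη ν hν 2
  have hb1 : 0 < b1 := Cstb_pos J hJ η hη ν hν 1
  have hA : 0 < η0 * b1 - lam * b0 := by
    rw [lt_div_iff₀ hb0] at hlam; linarith
  set s := Real.sqrt ((η0 + lam * b1) ^ 2 - 4 * lam ^ 2 * b0) with hsdef
  have hs0 : 0 ≤ s := Real.sqrt_nonneg _
  have hΔpos : 0 < (η0 + lam * b1) ^ 2 - 4 * lam ^ 2 * b0 := by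
    nlinarith [sq_nonneg (η0 - lam * b1)]
  have hs2 : s ^ 2 = (η0 + lam * b1) ^ 2 - 4 * lam ^ 2 * b0 := Real.sq_sqrt hΔpos.le
  have hsgt : η0 - lam * b1 < s := by nlinarith
  have hsgt' : lam * b1 - η0 < s := by nlinarith
  have hxpos : 0 < x := by
    rw [hx]
    apply mul_pos_of_neg_of_neg
    · simp only [neg_neg, Left.neg_neg_iff]
      positivity
    · linarith
  have hlin : 2 * (η0 * b1 - lam * b0) * x + η0 * (η0 - lam * b1) = η0 * s := by
    rw [hx]; field_simp; ring
  have key : ∀ y : ℝ, 0 < y → (lamEff J 2 η0 η ν y = lam ↔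
      (η0 * b1 - lam * b0) * y ^ 2 + η0 * (η0 - lam * b1) * y - lam * η0 ^ 2 = 0) := by
    intro y hy
    rw [lamEff_two, ← hb0def, ← hb1def]
    have hrw : b0 + η0 / y * b1 + (η0 / y) ^ 2
        = (b0 * y ^ 2 + η0 * b1 * y + η0 ^ 2) / y ^ 2 := by
      field_simp
    have hD : 0 < b0 + η0 / y * b1 + (η0 / y) ^ 2 := by positivity
    have hD2 : b0 * y ^ 2 + η0 * b1 * y + η0 ^ 2 ≠ 0 := by
      rw [hrw] at hD
      intro h; rw [h] at hD; simp at hD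
    rw [hrw, div_div_eq_mul_div]
    rw [show y * (1 - b0 * y ^ 2 / (b0 * y ^ 2 + η0 * b1 * y + η0 ^ 2))
        = (η0 * b1 * y ^ 2 + η0 ^ 2 * y) / (b0 * y ^ 2 + η0 * b1 * y + η0 ^ 2) by
      field_simp; ring]
    rw [div_eq_iff hD2]
    constructor
    · intro h; linear_combination h
    · intro h; linear_combination h
  refine ⟨hxpos, ?_, ?_⟩
  · rw [key x hxpos]
    have h4 : 4 * (η0 * b1 - lam * b0) *
        ((η0 * b1 - lam * b0) * x ^ 2 + η0 * (η0 - lam * b1) * x - lam * η0 ^ 2) = 0 := by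
      linear_combination
        (2 * (η0 * b1 - lam * b0) * x + η0 * (η0 - lam * b1) + η0 * s) * hlin
          + η0 ^ 2 * hs2
    rcases mul_eq_zero.mp h4 with h | h
    · exfalso; nlinarith
    · exact h
  · intro y hy heq
    have hq := (key y hy).mp heq
    have hfac : (2 * (η0 * b1 - lam * b0) * y + η0 * (η0 - lam * b1) - η0 * s) *
        (2 * (η0 * b1 - lam * b0) * y + η0 * (η0 - lam * b1) + η0 * s) = 0 := by
      linear_combination 4 * (η0 * b1 - lam * b0) * hq - η0 ^ 2 * hs2
    have hpos : 0 < 2 * (η0 * b1 - lam * b0) * y + η0 * (η0 - lam * b1) + η0 * s := by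
      nlinarith
    have h0 : 2 * (η0 * b1 - lam * b0) * y + η0 * (η0 - lam * b1) - η0 * s = 0 := by
      rcases mul_eq_zero.mp hfac with h | h
      · exact h
      · exact absurd h hpos.ne'
    have : 2 * (η0 * b1 - lam * b0) * y = 2 * (η0 * b1 - lam * b0) * x := by linarith
    exact mul_left_cancel₀ (by positivity) this
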